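/- In the star graphs G(m) and H(m), classify nodes into three classes: class 1 = the center, class 2 = r1-leaves, class 3 = r2-leaves. Then for all pairs (u1,v1) of nodes of G(m) and (u2,v2) of nodes of H(m) with (class(u1), class(v1)) = (class(u2), class(v2)), and every FOC2 formula φ(x,y) with all counting thresholds ≤ m, (G(m),u1,v1) ⊨ φ iff (H(m),u2,v2) ⊨ φ. The proof is by induction on quantifier depth, using that class-1 nodes number exactly 1 in each graph and class-2, class-3 nodes each number more than m in each graph. -/

import Mathlib

inductive Var : Type
  | x | y
deriving DecidableEq

structure MRGraph (P1 P2 : Type) where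
  V : Type
  [fintV : Fintype V]
  [decV : DecidableEq V]
  unary : P1 → V → Prop
  rel : P2 → V → V → Prop
  [decU : ∀ p, DecidablePred (unary p)]
  [decR : ∀ r, DecidableRel (rel r)]

attribute [instance] MRGraph.fintV MRGraph.decV MRGraph.decU MRGraph.decR

inductive FOC2 (P1 P2 : Type) : Type
  | tru : FOC2 P1 P2
  | atom : P1 → Var → FOC2 P1 P2
  | rel : P2 → Var → Var → FOC2 P1 P2
  | and : FOC2 P1 P2 → FOC2 P1 P2 → FOC2 P1 P2
  | or : FOC2 P1 P2 → FOC2 P1 P2 → FOC2 P1 P2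
  | not : FOC2 P1 P2 → FOC2 P1 P2
  | exge : ℕ → Var → FOC2 P1 P2 → FOC2 P1 P2

variable {P1 P2 : Type}

/-- Satisfaction of a `FOC2` formula in a multi-relational graph under an assignment. -/
def MRGraph.sat (G : MRGraph P1 P2) : (Var → G.V) → FOC2 P1 P2 → Prop
  | _, .tru => True
  | σ, .atom p v => G.unary p (σ v)
  | σ, .rel r u w => G.rel r (σ u) (σ w)
  | σ, .and φ ψ => G.sat σ φ ∧ G.sat σ ψ
  | σ, .or φ ψ => G.sat σ φ ∨ G.sat σ ψ
  | σ, .not φ => ¬ G.sat σ φ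
  | σ, .exge n v φ => ∃ S : Finset G.V, S.card = n ∧ ∀ a ∈ S, G.sat (Function.update σ v a) φ

/-- Quantifier depth. -/
def FOC2.depth : FOC2 P1 P2 → ℕ
  | .tru => 0
  | .atom _ _ => 0
  | .rel _ _ _ => 0
  | .and φ ψ => max φ.depth ψ.depth
  | .or φ ψ => max φ.depth ψ.depth
  | .not φ => φ.depth
  | .exge _ _ φ => φ.depth + 1

/-- All counting thresholds are at most `m`. -/
def FOC2.thresholdsLe (m : ℕ) : FOC2 P1 P2 → Prop
  | .tru => True
  | .atom _ _ => True
  | .rel _ _ _ => True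
  | .and φ ψ => φ.thresholdsLe m ∧ ψ.thresholdsLe m
  | .or φ ψ => φ.thresholdsLe m ∧ ψ.thresholdsLe m
  | .not φ => φ.thresholdsLe m
  | .exge n _ φ => n ≤ m ∧ φ.thresholdsLe m

/-- Free variables. -/
def FOC2.freeVars : FOC2 P1 P2 → Finset Var
  | .tru => ∅
  | .atom _ v => {v}
  | .rel _ u w => {u, w}
  | .and φ ψ => φ.freeVars ∪ ψ.freeVars
  | .or φ ψ => φ.freeVars ∪ ψ.freeVars
  | .not φ => φ.freeVars
  | .exge _ v φ => φ.freeVars \ {v}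

/-- Parse-tree size. -/
def FOC2.size : FOC2 P1 P2 → ℕ
  | .tru => 1
  | .atom _ _ => 1
  | .rel _ _ _ => 1
  | .and φ ψ => φ.size + ψ.size + 1
  | .or φ ψ => φ.size + ψ.size + 1
  | .not φ => φ.size + 1
  | .exge _ _ φ => φ.size + 1


/-- `r`-edge predicate from the centre of a star with `p` r1-leaves (nodes `1..p`)
followed by r2-leaves (nodes `p+1..`). `r = true` is `r1`, `r = false` is `r2`. -/
def starEdge (p : ℕ) (r : Bool) (i : ℕ) : Prop :=
  (r = true ∧ 1 ≤ i ∧ i ≤ p) ∨ (r = false ∧ p + 1 ≤ i)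

instance (p : ℕ) (r : Bool) (i : ℕ) : Decidable (starEdge p r i) := by
  unfold starEdge; infer_instance

/-- Star graph: node `0` is the centre, nodes `1..p` are `r1`-leaves and
nodes `p+1..p+q` are `r2`-leaves; edges are symmetric. -/
def star (p q : ℕ) : MRGraph Empty Bool where
  V := Fin (p + q + 1)
  unary := fun e _ => e.elim
  rel := fun r a b =>
    (a.val = 0 ∧ starEdge p r b.val) ∨ (b.val = 0 ∧ starEdge p r a.val)
  decU := fun e => e.elim
  decR := fun _ _ _ => by infer_instance

/-- The centre of a star graph. -/
def starCenter (p q : ℕ) : (star p q).V := ⟨0, Nat.succ_pos _⟩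

/-- Class of a node of a star graph: `0` = centre, `1` = r1-leaf, `2` = r2-leaf. -/
def clsStar (p q : ℕ) (v : (star p q).V) : Fin 3 :=
  if v.val = 0 then 0 else if v.val ≤ p then 1 else 2

/-!
Colour every node of a star by its class. Edges are determined by the colours of their
endpoints, so by induction on `φ` its truth under an assignment depends only on the colours of
the assigned nodes. At a counting quantifier `∃≥n` with `n ≤ m` the witnesses form a union of
colour classes, and it suffices that the two stars have the same class sizes after truncation
at `m`: the centre is unique in both, and each leaf class has at least `2m` nodes.
-/

open Finset

theorem Finset.min_sum_eq_min_sum {ι : Type*} (s : Finset ι) {f g : ι → ℕ} {m : ℕ}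
    (h : ∀ i ∈ s, min (f i) m = min (g i) m) :
    min (∑ i ∈ s, f i) m = min (∑ i ∈ s, g i) m := by
  classical
  induction s using Finset.induction_on with
  | empty => rfl
  | insert i s hi ih =>
    rw [sum_insert hi, sum_insert hi]
    have hi' := h i (mem_insert_self i s)
    have hs := ih fun j hj => h j (mem_insert_of_mem hj)
    omega

section ClassCount

variable {α β C : Type*} [Fintype α] [Fintype β] [DecidableEq C]
  {cα : α → C} {cβ : β → C} {m : ℕ}
  (hcount : ∀ k, min #{a | cα a = k} m = min #{b | cβ b = k} m)
  {S : α → Prop} {T : β → Prop} [DecidablePred S] [DecidablePred T]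
  (hST : ∀ a b, cα a = cβ b → (S a ↔ T b))
include hcount hST

theorem min_card_filter_and_eq_of_classes (k : C) :
    min #{a | S a ∧ cα a = k} m = min #{b | T b ∧ cβ b = k} m := by
  rcases eq_or_ne m 0 with rfl | hm
  · simp
  have hne : 0 < #{a | cα a = k} ↔ 0 < #{b | cβ b = k} := by
    have := hcount k
    omega
  simp only [card_pos, filter_nonempty_iff, mem_univ, true_and] at hne
  -- On a class met by both sides, `hST` makes `S` and `T` constant there, with equal values.
  by_cases h : ∃ a b, cα a = k ∧ cβ b = k ∧ T b
  · obtain ⟨a₀, b₀, ha₀, hb₀, hT₀⟩ := h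
    rw [filter_congr fun a _ => show S a ∧ cα a = k ↔ cα a = k by grind,
      filter_congr fun b _ => show T b ∧ cβ b = k ↔ cβ b = k by grind]
    exact hcount k
  · rw [filter_false_of_mem fun a _ => show ¬(S a ∧ cα a = k) by grind,
      filter_false_of_mem fun b _ => show ¬(T b ∧ cβ b = k) by grind]
    simp

theorem min_card_filter_eq_of_classes [Fintype C] :
    min #{a | S a} m = min #{b | T b} m := by
  rw [card_eq_sum_card_fiberwise (f := cα) (t := univ) fun _ _ => mem_coe.2 (mem_univ _),
    card_eq_sum_card_fiberwise (f := cβ) (t := univ) fun _ _ => mem_coe.2 (mem_univ _)]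
  simp only [filter_filter]
  exact min_sum_eq_min_sum _ fun k _ => min_card_filter_and_eq_of_classes hcount hST k

end ClassCount

namespace MRGraph

open scoped Classical in
theorem sat_exge_iff (G : MRGraph P1 P2) (σ : Var → G.V) (n : ℕ) (v : Var) (φ : FOC2 P1 P2) :
    G.sat σ (.exge n v φ) ↔ n ≤ #{a | G.sat (Function.update σ v a) φ} := by
  constructor
  · rintro ⟨S, rfl, hS⟩
    exact card_le_card fun a ha => mem_filter.2 ⟨mem_univ a, hS a ha⟩
  · intro h
    obtain ⟨S, hS, rfl⟩ := exists_subset_card_eq h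
    exact ⟨S, rfl, fun a ha => (mem_filter.1 (hS ha)).2⟩

theorem sat_iff_of_classes {C : Type*} [Fintype C] [DecidableEq C] {G H : MRGraph P1 P2}
    {cG : G.V → C} {cH : H.V → C} {m : ℕ}
    (hunary : ∀ p a b, cG a = cH b → (G.unary p a ↔ H.unary p b))
    (hrel : ∀ r a a' b b', cG a = cH b → cG a' = cH b' → (G.rel r a a' ↔ H.rel r b b'))
    (hcount : ∀ k, min #{a | cG a = k} m = min #{b | cH b = k} m)
    {φ : FOC2 P1 P2} (hφ : φ.thresholdsLe m) {σG : Var → G.V} {σH : Var → H.V}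
    (hσ : ∀ w, cG (σG w) = cH (σH w)) :
    G.sat σG φ ↔ H.sat σH φ := by
  induction φ generalizing σG σH with
  | tru => exact Iff.rfl
  | atom p v => exact hunary p _ _ (hσ v)
  | rel r u w => exact hrel r _ _ _ _ (hσ u) (hσ w)
  | and φ ψ ihφ ihψ => exact and_congr (ihφ hφ.1 hσ) (ihψ hφ.2 hσ)
  | or φ ψ ihφ ihψ => exact or_congr (ihφ hφ.1 hσ) (ihψ hφ.2 hσ)
  | not φ ih => exact not_congr (ih hφ hσ)
  | exge n v ψ ih =>
    classical
    have hupdate : ∀ a b, cG a = cH b →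
        (G.sat (Function.update σG v a) ψ ↔ H.sat (Function.update σH v b) ψ) := by
      intro a b hab
      refine ih hφ.2 fun w => ?_
      rcases eq_or_ne w v with rfl | hw
      · simpa using hab
      · simpa [Function.update_of_ne hw] using hσ w
    have hmin := min_card_filter_eq_of_classes hcount hupdate
    rw [sat_exge_iff, sat_exge_iff]
    have := hφ.1
    omega

end MRGraph

theorem Fin.card_filter_val {n : ℕ} (P : ℕ → Prop) [DecidablePred P] :
    #{a : Fin n | P a} = #{i ∈ range n | P i} := by
  rw [← card_map Fin.valEmbedding]
  congr 1
  ext i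
  simp only [mem_map, mem_filter, mem_univ, true_and, valEmbedding_apply, mem_range]
  constructor
  · rintro ⟨a, ha, rfl⟩
    exact ⟨a.isLt, ha⟩
  · rintro ⟨hi, hP⟩
    exact ⟨⟨i, hi⟩, hP, rfl⟩

section Star

variable {p q : ℕ}

theorem clsStar_eq_zero_iff (a : (star p q).V) : clsStar p q a = 0 ↔ a.val = 0 := by
  unfold clsStar; grind

theorem clsStar_eq_one_iff (a : (star p q).V) : clsStar p q a = 1 ↔ 1 ≤ a.val ∧ a.val ≤ p := by
  unfold clsStar; grind

theorem clsStar_eq_two_iff (a : (star p q).V) : clsStar p q a = 2 ↔ p < a.val := by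
  unfold clsStar; grind

theorem star_rel_iff (r : Bool) (a b : (star p q).V) :
    (star p q).rel r a b ↔
      (clsStar p q a = 0 ∧ clsStar p q b = cond r 1 2) ∨
        (clsStar p q b = 0 ∧ clsStar p q a = cond r 1 2) := by
  change (a.val = 0 ∧ starEdge p r b.val) ∨ (b.val = 0 ∧ starEdge p r a.val) ↔ _
  cases r <;> simp only [starEdge, cond_true, cond_false, clsStar_eq_zero_iff, clsStar_eq_one_iff,
    clsStar_eq_two_iff, Nat.add_one_le_iff, Bool.false_eq_true, Bool.true_eq_false, true_and,
    false_and, or_false, false_or]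

variable (p q) in
theorem card_clsStar_eq_zero : #{a : (star p q).V | clsStar p q a = 0} = 1 := by
  rw [filter_congr fun a _ => clsStar_eq_zero_iff a]
  calc _ = #{i ∈ range (p + q + 1) | i = 0} := Fin.card_filter_val _
    _ = #{0} := by congr 1; ext i; simp only [mem_filter, mem_range, mem_singleton]; omega
    _ = 1 := card_singleton 0

variable (p q) in
theorem card_clsStar_eq_one : #{a : (star p q).V | clsStar p q a = 1} = p := by
  rw [filter_congr fun a _ => clsStar_eq_one_iff a]
  calc _ = #{i ∈ range (p + q + 1) | 1 ≤ i ∧ i ≤ p} := Fin.card_filter_val _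
    _ = #(Icc 1 p) := by congr 1; ext i; simp only [mem_filter, mem_range, mem_Icc]; omega
    _ = p := by simp

variable (p q) in
theorem card_clsStar_eq_two : #{a : (star p q).V | clsStar p q a = 2} = q := by
  rw [filter_congr fun a _ => clsStar_eq_two_iff a]
  calc _ = #{i ∈ range (p + q + 1) | p < i} := Fin.card_filter_val _
    _ = #(Ioc p (p + q)) := by congr 1; ext i; simp only [mem_filter, mem_range, mem_Ioc]; omega
    _ = q := by simp

variable {m p' q' : ℕ} (hp : m ≤ p) (hq : m ≤ q) (hp' : m ≤ p') (hq' : m ≤ q')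
include hp hq hp' hq'

theorem min_card_clsStar_eq (k : Fin 3) :
    min #{a : (star p q).V | clsStar p q a = k} m =
      min #{b : (star p' q').V | clsStar p' q' b = k} m := by
  fin_cases k <;> simp only [Fin.zero_eta, Fin.mk_one, Fin.reduceFinMk, card_clsStar_eq_zero,
    card_clsStar_eq_one, card_clsStar_eq_two] <;> omega

theorem star_sat_iff_of_clsStar_eq {φ : FOC2 Empty Bool} (hφ : φ.thresholdsLe m)
    {σ : Var → (star p q).V} {σ' : Var → (star p' q').V}
    (hσ : ∀ w, clsStar p q (σ w) = clsStar p' q' (σ' w)) :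
    (star p q).sat σ φ ↔ (star p' q').sat σ' φ :=
  MRGraph.sat_iff_of_classes (fun e => e.elim)
    (fun r a a' b b' h h' => by rw [star_rel_iff, star_rel_iff, h, h'])
    (min_card_clsStar_eq hp hq hp' hq') hφ hσ

end Star

/-- For pairs of nodes of `G(m)` and `H(m)` with matching class labels, no `FOC2` formula
with all counting thresholds at most `m` can distinguish them. -/
theorem stmt19 (m : ℕ) (φ : FOC2 Empty Bool) (hth : φ.thresholdsLe m)
    (u1 v1 : (star (2 * m + 1) (2 * m)).V) (u2 v2 : (star (2 * m) (2 * m + 1)).V)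
    (hu : clsStar (2 * m + 1) (2 * m) u1 = clsStar (2 * m) (2 * m + 1) u2)
    (hv : clsStar (2 * m + 1) (2 * m) v1 = clsStar (2 * m) (2 * m + 1) v2) :
    ((star (2 * m + 1) (2 * m)).sat
        (fun w => match w with | Var.x => u1 | Var.y => v1) φ ↔
     (star (2 * m) (2 * m + 1)).sat
        (fun w => match w with | Var.x => u2 | Var.y => v2) φ) :=
  star_sat_iff_of_clsStar_eq (by omega) (by omega) (by omega) (by omega) hth
    fun | .x => hu | .y => hv
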